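/- Let n ≥ 1, let k ∈ [1..n−1], let χ be a real number with 0 < χ < n, and let x₁, x₂, w ∈ {0,1}^n with |x₁|₁ = |x₂|₁ = |w|₁ = n − k, Hamming distance of x₁ and x₂ equal to 2, w ≠ x₁, and w ≠ x₂. Then the probability that uniform crossover of x₁ and x₂, followed independently by standard bit mutation with rate χ/n, produces a string z with |z|₁ = n − k and z ≠ w is at least (1/2)·(1 − χ/n)^n·(1 + χ/2). -/

import Mathlib

open scoped ENNReal

namespace GA

attribute [local instance] Classical.propDecidable

/-- Bit strings of length `n`. -/
abbrev BitString (n : ℕ) := Fin n → Bool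

/-- The number of ones in a bit string. -/
def oneCount {n : ℕ} (x : BitString n) : ℕ := (Finset.univ.filter fun i => x i = true).card

/-- The all-ones string, the unique global optimum of `jump`. -/
def allOnes (n : ℕ) : BitString n := fun _ => true

/-- The Hamming distance of two bit strings. -/
def hamming {n : ℕ} (x y : BitString n) : ℕ := (Finset.univ.filter fun i => x i ≠ y i).card

/-- The jump function with gap size `k`. -/
def jump (n k : ℕ) (x : BitString n) : ℕ :=
  if oneCount x = n ∨ oneCount x ≤ n - k then k + oneCount x else n - oneCount x

/-- Interpret a real number as a probability in `ℝ≥0∞` (clamped to `[0,1]`). -/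
noncomputable def toProb (p : ℝ) : ℝ≥0∞ := min (ENNReal.ofReal p) 1

lemma toProb_le_one (p : ℝ) : toProb p ≤ 1 := min_le_right _ _

/-- The product of independent distributions on the bits, as a distribution on bit strings. -/
noncomputable def pmfPi {n : ℕ} (p : Fin n → PMF Bool) : PMF (BitString n) :=
  PMF.ofFintype (fun z => ∏ i, p i (z i)) (by
    have h1 : ∀ i : Fin n, ∑ b : Bool, p i b = 1 := fun i => by
      rw [← tsum_fintype (L := SummationFilter.unconditional _)]; exact (p i).tsum_coe
    calc ∑ z : BitString n, ∏ i, p i (z i)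
        = ∑ z ∈ Fintype.piFinset (fun _ : Fin n => (Finset.univ : Finset Bool)),
            ∏ i, p i (z i) := by rw [Fintype.piFinset_univ]
      _ = ∏ i, ∑ b : Bool, p i b := (Finset.prod_univ_sum _ _).symm
      _ = 1 := Finset.prod_eq_one fun i _ => h1 i)

/-- The distribution of one bit after flipping `a` with probability `p`. -/
noncomputable def bitFlip (p : ℝ≥0∞) (hp : p ≤ 1) (a : Bool) : PMF Bool :=
  PMF.ofFintype (fun b => if b = a then 1 - p else p) (by
    rw [Fintype.sum_bool]
    cases a
    · rw [if_neg (fun h => Bool.noConfusion h), if_pos rfl]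
      exact add_tsub_cancel_of_le hp
    · rw [if_pos rfl, if_neg (fun h => Bool.noConfusion h)]
      exact tsub_add_cancel_of_le hp)

/-- Standard bit mutation with mutation rate `p`: every bit of `x` is flipped independently
with probability `p`. -/
noncomputable def mutate {n : ℕ} (p : ℝ≥0∞) (hp : p ≤ 1) (x : BitString n) : PMF (BitString n) :=
  pmfPi fun i => bitFlip p hp (x i)

/-- One bit of a uniform crossover. -/
noncomputable def crossBit (a b : Bool) : PMF Bool :=
  if a = b then PMF.pure a else PMF.uniformOfFintype Bool

/-- Uniform crossover of `x` and `y`: every bit is chosen uniformly at random from the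
corresponding bits of the two parents, independently across positions. -/
noncomputable def crossover {n : ℕ} (x y : BitString n) : PMF (BitString n) :=
  pmfPi fun i => crossBit (x i) (y i)

/-- Uniform crossover of `x` and `y` followed (independently) by standard bit mutation
with rate `p`. -/
noncomputable def crossMut {n : ℕ} (p : ℝ≥0∞) (hp : p ≤ 1) (x y : BitString n) :
    PMF (BitString n) :=
  (crossover x y).bind (mutate p hp)

/-- The probability of an event under a discrete distribution. -/
noncomputable def prEvent {α : Type*} (p : PMF α) (E : α → Prop) : ℝ≥0∞ :=
  ∑' a, if E a then p a else 0

/-- Conditional probability `Pr[E | A]`. -/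
noncomputable def condPr {α : Type*} (p : PMF α) (E A : α → Prop) : ℝ≥0∞ :=
  prEvent p (fun a => E a ∧ A a) / prEvent p A

/-- The minimal fitness value in a nonempty population. -/
noncomputable def minFit {n : ℕ} (f : BitString n → ℕ) (Q : Multiset (BitString n))
    (hQ : Q ≠ 0) : ℕ :=
  (Q.map f).toFinset.min' (by
    rw [Multiset.toFinset_nonempty]
    simpa [Multiset.map_eq_zero] using hQ)

lemma filter_minFit_ne {n : ℕ} (f : BitString n → ℕ) (Q : Multiset (BitString n)) (hQ : Q ≠ 0) :
    Q.filter (fun a => f a = minFit f Q hQ) ≠ 0 := by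
  have hmem : minFit f Q hQ ∈ (Q.map f).toFinset := Finset.min'_mem _ _
  rw [Multiset.mem_toFinset, Multiset.mem_map] at hmem
  obtain ⟨a, haQ, hfa⟩ := hmem
  intro h0
  have hin : a ∈ Q.filter (fun a => f a = minFit f Q hQ) :=
    Multiset.mem_filter.mpr ⟨haQ, hfa⟩
  rw [h0] at hin
  exact absurd hin (Multiset.notMem_zero a)

/-- Remove an individual with lowest `f`-value from `Q`, breaking ties uniformly at random. -/
noncomputable def removeWorst {n : ℕ} (f : BitString n → ℕ) (Q : Multiset (BitString n))
    (hQ : Q ≠ 0) : PMF (Multiset (BitString n)) :=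
  (PMF.ofMultiset (Q.filter (fun a => f a = minFit f Q hQ)) (filter_minFit_ne f Q hQ)).map
    (fun ℓ => Q.erase ℓ)

/-- The complete random outcome of one iteration of the `(μ+1)` GA: whether crossover was
used, the selected parent(s), the offspring, and the next population. -/
structure IterOutcome (n : ℕ) where
  cross : Bool
  par1 : BitString n
  par2 : BitString n
  off : BitString n
  newPop : Multiset (BitString n)

/-- One iteration of the `(μ+1)` GA with crossover rate `pc` and mutation rate `pm`,
maximizing `f`, started from population `P`: with probability `pc` two parents are chosen
uniformly at random with replacement and an offspring is created by uniform crossover followed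
by standard bit mutation; otherwise a uniformly random individual is mutated. Afterwards an
individual of lowest fitness among `P` plus the offspring is removed, ties broken uniformly. -/
noncomputable def iterPMF (n : ℕ) (f : BitString n → ℕ) (pc pm : ℝ)
    (P : Multiset (BitString n)) : PMF (IterOutcome n) :=
  if hP : P ≠ 0 then
    ((PMF.bernoulli (toProb pc).toNNReal
      (by simpa using ENNReal.toNNReal_mono ENNReal.one_ne_top (toProb_le_one pc))).bind fun doCross =>
      if doCross then
        (PMF.ofMultiset P hP).bind fun x =>
          (PMF.ofMultiset P hP).bind fun y =>
            (crossMut (toProb pm) (toProb_le_one pm) x y).map fun z =>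
              ((true, x, y, z) : Bool × BitString n × BitString n × BitString n)
      else
        (PMF.ofMultiset P hP).bind fun x =>
          (mutate (toProb pm) (toProb_le_one pm) x).map fun z => (false, x, x, z)).bind fun r =>
      (removeWorst f (r.2.2.2 ::ₘ P) (Multiset.cons_ne_zero)).map fun P' =>
        ⟨r.1, r.2.1, r.2.2.1, r.2.2.2, P'⟩
  else PMF.pure ⟨false, fun _ => false, fun _ => false, fun _ => false, P⟩

/-- A multiset of `m` independent samples from `p`. -/
noncomputable def iidMultiset {α : Type*} (p : PMF α) : ℕ → PMF (Multiset α)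
  | 0 => PMF.pure 0
  | m + 1 => (iidMultiset p m).bind fun s => p.map fun a => a ::ₘ s

/-- The initial population of the `(μ+1)` GA: `μ` independent uniform samples. -/
noncomputable def initPop (n μ : ℕ) : PMF (Multiset (BitString n)) :=
  iidMultiset (PMF.uniformOfFintype (BitString n)) μ

/-- State of the run of the GA on `jump n k`: current population together with a flag
recording whether the global optimum has been evaluated so far. -/
noncomputable def gaStepFlag (n k : ℕ) (pc pm : ℝ) :
    Multiset (BitString n) × Bool → PMF (Multiset (BitString n) × Bool) := fun s =>
  (iterPMF n (jump n k) pc pm s.1).map fun o => (o.newPop, s.2 || decide (o.off = allOnes n))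

/-- One step of the GA on `jump n k`, tracking only the population. -/
noncomputable def gaStepPop (n k : ℕ) (pc pm : ℝ) :
    Multiset (BitString n) → PMF (Multiset (BitString n)) := fun P =>
  (iterPMF n (jump n k) pc pm P).map fun o => o.newPop

/-- The initial state of the GA on `jump n k` (population plus flag whether the optimum
was evaluated during initialization). -/
noncomputable def initState (n μ : ℕ) : PMF (Multiset (BitString n) × Bool) :=
  (initPop n μ).map fun P => (P, decide (allOnes n ∈ P))

/-- `survive step G t s` is the probability that a Markov chain with transition kernel `step`
started in `s` does not visit the set `G` during the first `t` steps (including time 0),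
i.e. `Pr[T > t]` for the hitting time `T` of `G`. -/
noncomputable def survive {S : Type*} (step : S → PMF S) (G : S → Prop) : ℕ → S → ℝ≥0∞
  | 0, s => if G s then 0 else 1
  | t + 1, s => if G s then 0 else ∑' s', step s s' * survive step G t s'

/-- `Pr[T ≤ t]` for the hitting time `T` of `G` of the Markov chain `step` started in `s`. -/
noncomputable def prHitBy {S : Type*} (step : S → PMF S) (G : S → Prop) (t : ℕ) (s : S) :
    ℝ≥0∞ :=
  1 - survive step G t s

/-- The expected hitting time `E[T]`, `T = inf {t | X_t ∈ G}`, of a Markov chain with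
transition kernel `step` and initial distribution `ρ`, computed as `∑_t Pr[T > t]`. -/
noncomputable def expectedHitting {S : Type*} (step : S → PMF S) (G : S → Prop) (ρ : PMF S) :
    ℝ≥0∞ :=
  ∑' t : ℕ, ∑' s, ρ s * survive step G t s

/-- The expected runtime (number of fitness evaluations until the global optimum is evaluated
for the first time) of the `(μ+1)` GA on `jump n k`: the `μ` initial evaluations plus the
expected number of iterations until the optimum is evaluated. -/
noncomputable def expectedRuntime (n k μ : ℕ) (pc pm : ℝ) : ℝ≥0∞ :=
  μ + expectedHitting (gaStepFlag n k pc pm) (fun s => s.2 = true) (initState n μ)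

/-- The expected number of iterations of the `(μ+1)` GA on `jump n k` until the optimum is
evaluated or the entire population is on the plateau. -/
noncomputable def expectedTimePlateau (n k μ : ℕ) (pc pm : ℝ) : ℝ≥0∞ :=
  expectedHitting (gaStepFlag n k pc pm)
    (fun s => s.2 = true ∨ ∀ x ∈ s.1, oneCount x = n - k) (initState n μ)

/-!
Write `c = oneCount x₁`. As `x₁` and `x₂` have equally many ones and differ in exactly two
positions, `x₂` arises from `x₁` by clearing a one-bit `i` and setting a zero-bit `j`. Uniform
crossover therefore yields each of `x₁`, `x₂`, `x₁` with `j` set, and `x₁` with `i` cleared with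
probability `1/4`. The first two are on the plateau and survive mutation unchanged with probability
`(1-p)^n`. The third has `c + 1` ones and the fourth `n - c + 1` zeros; flipping exactly one of them
returns to the plateau, and in each case at most one of these flips produces `w`. This leaves `n`
single-bit mutations of probability `(1-p)^(n-1) p` each, so the probability is at least
`(2 (1-p)^n + n (1-p)^(n-1) p) / 4`, and `n p = χ`, `(1-p)^(n-1) ≥ (1-p)^n` give the bound.
-/

lemma prEvent_eq_toOuterMeasure {α : Type*} (p : PMF α) (E : α → Prop) :
    prEvent p E = p.toOuterMeasure {a | E a} := by
  rw [PMF.toOuterMeasure_apply]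
  rfl

lemma prEvent_bind {α β : Type*} (p : PMF α) (f : α → PMF β) (E : β → Prop) :
    prEvent (p.bind f) E = ∑' a, p a * prEvent (f a) E := by
  simp only [prEvent_eq_toOuterMeasure, PMF.toOuterMeasure_bind_apply]

lemma sum_le_prEvent {α : Type*} (p : PMF α) {E : α → Prop} (S : Finset α)
    (hS : ∀ a ∈ S, E a) : ∑ a ∈ S, p a ≤ prEvent p E := by
  rw [prEvent_eq_toOuterMeasure, ← PMF.toOuterMeasure_apply_finset]
  exact MeasureTheory.measure_mono hS

section

variable {n : ℕ} {p : ℝ≥0∞}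

def flipAt (y : BitString n) (m : Fin n) : BitString n :=
  Function.update y m (!y m)

@[simp]
lemma flipAt_apply_self (y : BitString n) (m : Fin n) : flipAt y m m = !y m :=
  Function.update_self ..

@[simp]
lemma flipAt_apply_of_ne (y : BitString n) {m l : Fin n} (h : l ≠ m) : flipAt y m l = y l :=
  Function.update_of_ne h ..

lemma flipAt_injective (y : BitString n) : Function.Injective (flipAt y) := by
  intro m m' h
  by_contra hne
  simpa [hne] using congrFun h m

lemma flipAt_apply_eq_or_eq {x y : BitString n} {m : Fin n} (hm : x m ≠ y m) (l : Fin n) :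
    flipAt x m l = x l ∨ flipAt x m l = y l := by
  by_cases hl : l = m
  · subst hl
    exact Or.inr (by simpa using (Bool.eq_not_iff.mpr hm.symm).symm)
  · exact Or.inl (flipAt_apply_of_ne x hl)

lemma hamming_self (y : BitString n) : hamming y y = 0 := by
  simp [hamming]

lemma hamming_flipAt (y : BitString n) (m : Fin n) : hamming y (flipAt y m) = 1 := by
  rw [hamming, Finset.card_eq_one]
  refine ⟨m, Finset.ext fun l => ?_⟩
  by_cases h : l = m <;> simp [h]

lemma oneCount_flipAt_of_true {y : BitString n} {m : Fin n} (h : y m = true) :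
    oneCount (flipAt y m) + 1 = oneCount y := by
  have hset : (Finset.univ.filter fun l => flipAt y m l = true)
      = (Finset.univ.filter fun l => y l = true).erase m := by
    ext l
    by_cases hl : l = m <;> simp [hl, h]
  rw [oneCount, hset, Finset.card_erase_add_one (by simpa using h), oneCount]

lemma oneCount_flipAt_of_false {y : BitString n} {m : Fin n} (h : y m = false) :
    oneCount (flipAt y m) = oneCount y + 1 := by
  have hset : (Finset.univ.filter fun l => flipAt y m l = true)
      = insert m (Finset.univ.filter fun l => y l = true) := by
    ext l
    by_cases hl : l = m <;> simp [hl, h]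
  rw [oneCount, hset, Finset.card_insert_of_notMem (by simp [h]), oneCount]

lemma oneCount_add_card_filter_false (y : BitString n) :
    oneCount y + (Finset.univ.filter fun m => y m = false).card = n := by
  simpa [oneCount] using
    Finset.card_filter_add_card_filter_not (s := Finset.univ) (fun m => y m = true)

lemma crossover_apply_of_forall_eq_or_eq {x y z : BitString n}
    (hz : ∀ m, z m = x m ∨ z m = y m) :
    crossover x y z = 2⁻¹ ^ hamming x y := by
  have hbit : ∀ m, crossBit (x m) (y m) (z m) = if x m ≠ y m then 2⁻¹ else 1 := by
    intro m
    by_cases h : x m = y m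
    · obtain hzm | hzm := hz m <;> simp [crossBit, h, hzm]
    · simp [crossBit, h, PMF.uniformOfFintype_apply]
  rw [crossover, pmfPi, PMF.ofFintype_apply, Finset.prod_congr rfl fun m _ => hbit m,
    Finset.prod_ite, Finset.prod_const_one, mul_one, Finset.prod_const, hamming]

lemma mutate_apply (hp : p ≤ 1) (x z : BitString n) :
    mutate p hp x z = (1 - p) ^ (n - hamming x z) * p ^ hamming x z := by
  have hflip : hamming x z = (Finset.univ.filter fun m => ¬ z m = x m).card := by
    simp only [hamming, ne_eq, eq_comm]
  have hkeep : (Finset.univ.filter fun m => z m = x m).card = n - hamming x z := by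
    have := Finset.card_filter_add_card_filter_not (s := Finset.univ) (fun m => z m = x m)
    simp only [Finset.card_univ, Fintype.card_fin] at this
    omega
  rw [mutate, pmfPi, PMF.ofFintype_apply]
  simp only [bitFlip, PMF.ofFintype_apply]
  rw [Finset.prod_ite, Finset.prod_const, Finset.prod_const, hkeep, hflip]

lemma pow_le_prEvent_mutate (hp : p ≤ 1) {E : BitString n → Prop} {y : BitString n} (hy : E y) :
    (1 - p) ^ n ≤ prEvent (mutate p hp y) E := by
  simpa [mutate_apply, hamming_self] using sum_le_prEvent (mutate p hp y) {y} (by simpa using hy)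

lemma card_mul_le_prEvent_mutate_flipAt (hp : p ≤ 1) (y w : BitString n) {c : ℕ}
    (T : Finset (Fin n)) (hT : ∀ m ∈ T, oneCount (flipAt y m) = c) :
    ((T.card - 1 : ℕ) : ℝ≥0∞) * ((1 - p) ^ (n - 1) * p) ≤
      prEvent (mutate p hp y) (fun z => oneCount z = c ∧ z ≠ w) := by
  set S := (T.image (flipAt y)).erase w
  have hS : T.card - 1 ≤ S.card := by
    simpa [Finset.card_image_of_injective T (flipAt_injective y)] using
      Finset.pred_card_le_card_erase (s := T.image (flipAt y)) (a := w)
  have hmem : ∀ z ∈ S,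
      mutate p hp y z = (1 - p) ^ (n - 1) * p ∧ oneCount z = c ∧ z ≠ w := by
    intro z hz
    obtain ⟨hzw, hz⟩ := Finset.mem_erase.mp hz
    obtain ⟨m, hm, rfl⟩ := Finset.mem_image.mp hz
    exact ⟨by rw [mutate_apply, hamming_flipAt, pow_one], hT m hm, hzw⟩
  calc ((T.card - 1 : ℕ) : ℝ≥0∞) * ((1 - p) ^ (n - 1) * p)
      ≤ S.card * ((1 - p) ^ (n - 1) * p) := by gcongr
    _ = ∑ z ∈ S, mutate p hp y z := by
      rw [Finset.sum_congr rfl fun z hz => (hmem z hz).1, Finset.sum_const, nsmul_eq_mul]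
    _ ≤ _ := sum_le_prEvent _ S fun z hz => (hmem z hz).2

lemma oneCount_mul_le_prEvent_mutate_flipAt_of_false (hp : p ≤ 1) (x w : BitString n)
    {j : Fin n} (hj : x j = false) :
    (oneCount x : ℝ≥0∞) * ((1 - p) ^ (n - 1) * p) ≤
      prEvent (mutate p hp (flipAt x j)) (fun z => oneCount z = oneCount x ∧ z ≠ w) := by
  have hup := oneCount_flipAt_of_false hj
  have h := card_mul_le_prEvent_mutate_flipAt hp (flipAt x j) w (c := oneCount x)
    (Finset.univ.filter fun m => flipAt x j m = true) fun m hm =>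
      by have := oneCount_flipAt_of_true (Finset.mem_filter.mp hm).2; omega
  rwa [← oneCount, hup, Nat.add_sub_cancel] at h

lemma sub_oneCount_mul_le_prEvent_mutate_flipAt_of_true (hp : p ≤ 1) (x w : BitString n)
    {i : Fin n} (hi : x i = true) :
    ((n - oneCount x : ℕ) : ℝ≥0∞) * ((1 - p) ^ (n - 1) * p) ≤
      prEvent (mutate p hp (flipAt x i)) (fun z => oneCount z = oneCount x ∧ z ≠ w) := by
  have hdown := oneCount_flipAt_of_true hi
  have hzeros := oneCount_add_card_filter_false (flipAt x i)
  have h := card_mul_le_prEvent_mutate_flipAt hp (flipAt x i) w (c := oneCount x)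
    (Finset.univ.filter fun m => flipAt x i m = false) fun m hm =>
      by have := oneCount_flipAt_of_false (Finset.mem_filter.mp hm).2; omega
  rwa [show (Finset.univ.filter fun m => flipAt x i m = false).card - 1 = n - oneCount x by
    omega] at h

lemma eq_flipAt_flipAt_of_ne_iff {x y : BitString n} {i j : Fin n} (hij : i ≠ j)
    (h : ∀ m, x m ≠ y m ↔ m = i ∨ m = j) : y = flipAt (flipAt x i) j := by
  funext m
  by_cases hmj : m = j
  · subst hmj
    simpa [hij.symm] using Bool.eq_not_iff.mpr ((h m).mpr (Or.inr rfl)).symm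
  by_cases hmi : m = i
  · subst hmi
    simpa [hmj] using Bool.eq_not_iff.mpr ((h m).mpr (Or.inl rfl)).symm
  simpa [hmi, hmj] using (not_not.mp ((h m).not.mpr (by tauto))).symm

lemma exists_eq_flipAt_flipAt_of_hamming_eq_two {x y : BitString n} (hd : hamming x y = 2)
    (hc : oneCount x = oneCount y) :
    ∃ i j, x i = true ∧ x j = false ∧ y = flipAt (flipAt x i) j := by
  obtain ⟨i, j, hij, hD⟩ := Finset.card_eq_two.mp hd
  have hdiff : ∀ m, x m ≠ y m ↔ m = i ∨ m = j := fun m => by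
    simpa using Finset.ext_iff.mp hD m
  have hy := eq_flipAt_flipAt_of_ne_iff hij hdiff
  have hxj : flipAt x i j = x j := flipAt_apply_of_ne x hij.symm
  cases hxi : x i <;> cases hxj' : x j
  · have h₁ := oneCount_flipAt_of_false hxi
    have h₂ := oneCount_flipAt_of_false (hxj.trans hxj')
    rw [← hy] at h₂
    omega
  · exact ⟨j, i, hxj', hxi,
      eq_flipAt_flipAt_of_ne_iff hij.symm fun m => (hdiff m).trans or_comm⟩
  · exact ⟨i, j, hxi, hxj', hy⟩
  · have h₁ := oneCount_flipAt_of_true hxi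
    have h₂ := oneCount_flipAt_of_true (hxj.trans hxj')
    rw [← hy] at h₂
    omega

lemma le_prEvent_crossMut_of_hamming_eq_two (hp : p ≤ 1) {x y : BitString n}
    (w : BitString n) (hd : hamming x y = 2) (hc : oneCount x = oneCount y) (hwx : w ≠ x)
    (hwy : w ≠ y) :
    4⁻¹ * (2 * (1 - p) ^ n + n * ((1 - p) ^ (n - 1) * p)) ≤
      prEvent (crossMut p hp x y) (fun z => oneCount z = oneCount x ∧ z ≠ w) := by
  obtain ⟨i, j, hi, hj, rfl⟩ := exists_eq_flipAt_flipAt_of_hamming_eq_two hd hc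
  have hij : i ≠ j := by rintro rfl; simp [hi] at hj
  set y := flipAt (flipAt x i) j
  have hyi : y i = false := by simp [y, hij, hi]
  have hyj : y j = true := by simp [y, hij.symm, hj]
  set E : BitString n → Prop := fun z => oneCount z = oneCount x ∧ z ≠ w
  set F : Finset (BitString n) := {x, y, flipAt x j, flipAt x i}
  have hchild : ∀ z ∈ F, crossover x y z = 4⁻¹ := by
    intro z hz
    rw [crossover_apply_of_forall_eq_or_eq, hd, ← ENNReal.inv_pow]
    · norm_num
    simp only [F, Finset.mem_insert, Finset.mem_singleton] at hz
    rcases hz with rfl | rfl | rfl | rfl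
    · exact fun _ => Or.inl rfl
    · exact fun _ => Or.inr rfl
    · exact flipAt_apply_eq_or_eq (by simp [hj, hyj])
    · exact flipAt_apply_eq_or_eq (by simp [hi, hyi])
  have hsum : ∀ g : BitString n → ℝ≥0∞,
      ∑ z ∈ F, g z = g x + (g y + (g (flipAt x j) + g (flipAt x i))) := by
    intro g
    rw [Finset.sum_insert, Finset.sum_insert, Finset.sum_insert, Finset.sum_singleton]
    all_goals simp only [Finset.mem_insert, Finset.mem_singleton, not_or]
    all_goals repeat' constructor
    all_goals apply ne_of_apply_ne (fun z : BitString n => (z i, z j))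
    all_goals simp [y, hi, hj, hij, hij.symm]
  have hn : (n : ℝ≥0∞) = oneCount x + (n - oneCount x : ℕ) := by
    have := oneCount_add_card_filter_false x
    norm_cast
    omega
  calc 4⁻¹ * (2 * (1 - p) ^ n + n * ((1 - p) ^ (n - 1) * p))
      = 4⁻¹ * ((1 - p) ^ n + ((1 - p) ^ n + (oneCount x * ((1 - p) ^ (n - 1) * p)
          + (n - oneCount x : ℕ) * ((1 - p) ^ (n - 1) * p)))) := by
        rw [hn, two_mul, add_mul, add_assoc]
    _ ≤ 4⁻¹ * ∑ z ∈ F, prEvent (mutate p hp z) E := by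
        rw [hsum]
        gcongr
        · exact pow_le_prEvent_mutate hp ⟨rfl, hwx.symm⟩
        · exact pow_le_prEvent_mutate hp ⟨hc.symm, hwy.symm⟩
        · exact oneCount_mul_le_prEvent_mutate_flipAt_of_false hp x w hj
        · exact sub_oneCount_mul_le_prEvent_mutate_flipAt_of_true hp x w hi
    _ = ∑ z ∈ F, crossover x y z * prEvent (mutate p hp z) E := by
        rw [Finset.mul_sum]
        exact Finset.sum_congr rfl fun z hz => by rw [hchild z hz]
    _ ≤ ∑' z, crossover x y z * prEvent (mutate p hp z) E := ENNReal.sum_le_tsum F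
    _ = prEvent (crossMut p hp x y) E := (prEvent_bind _ _ _).symm

end

lemma toProb_of_le_one {p : ℝ} (h : p ≤ 1) : toProb p = ENNReal.ofReal p :=
  min_eq_left (ENNReal.ofReal_le_one.mpr h)

lemma ofReal_half_pow_mul_one_add_le {n : ℕ} {χ : ℝ} (hχ0 : 0 < χ) (hχn : χ < n) :
    ENNReal.ofReal (1 / 2 * (1 - χ / n) ^ n * (1 + χ / 2)) ≤
      4⁻¹ * (2 * (1 - toProb (χ / n)) ^ n +
        n * ((1 - toProb (χ / n)) ^ (n - 1) * toProb (χ / n))) := by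
  have hn : (0 : ℝ) < n := hχ0.trans hχn
  set p := χ / n
  have hp0 : 0 ≤ p := by positivity
  have hp1 : p ≤ 1 := (div_le_one hn).mpr hχn.le
  have hnp : n * ((1 - p) ^ (n - 1) * p) = χ * (1 - p) ^ (n - 1) := by
    rw [← show (n : ℝ) * p = χ from mul_div_cancel₀ χ hn.ne']
    ring
  have hq : (1 - p) ^ n ≤ (1 - p) ^ (n - 1) :=
    pow_le_pow_of_le_one (by linarith) (by linarith) (Nat.sub_le n 1)
  calc ENNReal.ofReal (1 / 2 * (1 - p) ^ n * (1 + χ / 2))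
      ≤ ENNReal.ofReal (4⁻¹ * (2 * (1 - p) ^ n + n * ((1 - p) ^ (n - 1) * p))) := by
        apply ENNReal.ofReal_le_ofReal
        rw [hnp]
        linarith [mul_le_mul_of_nonneg_left hq hχ0.le]
    _ = _ := by
        rw [toProb_of_le_one hp1, ← ENNReal.ofReal_one, ← ENNReal.ofReal_sub _ hp0,
          ENNReal.ofReal_mul (by norm_num), ENNReal.ofReal_add (by positivity) (by positivity),
          ENNReal.ofReal_mul (by norm_num), ENNReal.ofReal_mul (by positivity),
          ENNReal.ofReal_mul (by positivity), ENNReal.ofReal_pow (by linarith),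
          ENNReal.ofReal_pow (by linarith), ENNReal.ofReal_natCast, ENNReal.ofReal_ofNat,
          ENNReal.ofReal_inv_of_pos (by norm_num), ENNReal.ofReal_ofNat]

theorem crossover_two_non_w_produces_non_w_general
    (n k : ℕ)
    (χ : ℝ) (hχ0 : 0 < χ) (hχn : χ < n)
    (x₁ x₂ w : BitString n) (hx₁ : oneCount x₁ = n - k) (hx₂ : oneCount x₂ = n - k)
    (hdist : hamming x₁ x₂ = 2)
    (hw1 : w ≠ x₁) (hw2 : w ≠ x₂) :
    ENNReal.ofReal (1 / 2 * (1 - χ / n) ^ n * (1 + χ / 2)) ≤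
      prEvent (crossMut (toProb (χ / n)) (toProb_le_one (χ / n)) x₁ x₂)
        (fun z => oneCount z = n - k ∧ z ≠ w) := by
  rw [← hx₁]
  exact (ofReal_half_pow_mul_one_add_le hχ0 hχn).trans
    (le_prEvent_crossMut_of_hamming_eq_two _ w hdist (hx₁.trans hx₂.symm) hw1 hw2)

/-- for `x₁, x₂, w` on the plateau (with `n - k` ones), `x₁, x₂` at Hamming
distance `2` and both different from `w`, uniform crossover of `x₁` and `x₂` followed by
standard bit mutation with rate `χ/n` produces a string `z` on the plateau with `z ≠ w` with
probability at least `(1/2)(1 - χ/n)^n (1 + χ/2)`. -/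
theorem crossover_two_non_w_produces_non_w
    (n k : ℕ) (hn : 1 ≤ n) (hk1 : 1 ≤ k) (hk2 : k + 1 ≤ n)
    (χ : ℝ) (hχ0 : 0 < χ) (hχn : χ < n)
    (x₁ x₂ w : BitString n) (hx₁ : oneCount x₁ = n - k) (hx₂ : oneCount x₂ = n - k)
    (hw : oneCount w = n - k) (hdist : hamming x₁ x₂ = 2)
    (hw1 : w ≠ x₁) (hw2 : w ≠ x₂) :
    ENNReal.ofReal (1 / 2 * (1 - χ / n) ^ n * (1 + χ / 2)) ≤
      prEvent (crossMut (toProb (χ / n)) (toProb_le_one (χ / n)) x₁ x₂)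
        (fun z => oneCount z = n - k ∧ z ≠ w) :=
  crossover_two_non_w_produces_non_w_general n k χ hχ0 hχn x₁ x₂ w hx₁ hx₂ hdist hw1 hw2

end GA
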